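/- arXiv:2006.14541 — 9 statements merged into one kernel-verified Lean document; each statement's English description precedes it below -/
import Mathlib

section
/- Let R be an associative ring of characteristic zero (or an algebra over a field of characteristic 0) satisfying the identity [x1,x2,x3][x4,x5,x6]=0 for all elements. Then for all elements y1,y2,y3,z1,z2,z3 and any element p of R, one has ([y1,y2][y3,y4]+[y1,y3][y2,y4])·p·[z1,z2,z3]=0, where [a,b]=ab−ba and [a,b,c]=[[a,b],c]. -/
/-- Commutator `[a,b] = ab - ba`. -/
def br {R : Type*} [Ring R] (a b : R) : R := a * b - b * a

/-- Left-normed triple commutator `[a,b,c] = [[a,b],c]`. -/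
def tr {R : Type*} [Ring R] (a b c : R) : R := br (br a b) c

/-- If an associative algebra over a field of characteristic zero satisfies the identity
`[x1,x2,x3][x4,x5,x6] = 0`, then
`([y1,y2][y3,y4] + [y1,y3][y2,y4])·p·[z1,z2,z3] = 0`. -/
theorem stmt1 {K R : Type*} [Field K] [CharZero K] [Ring R] [Algebra K R]
    (h : ∀ a₁ a₂ a₃ a₄ a₅ a₆ : R, tr a₁ a₂ a₃ * tr a₄ a₅ a₆ = 0)
    (y₁ y₂ y₃ y₄ p z₁ z₂ z₃ : R) :
    (br y₁ y₂ * br y₃ y₄ + br y₁ y₃ * br y₂ y₄) * p * tr z₁ z₂ z₃ = 0 := by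
  have L : ∀ a b c q : R, tr a b c * q * tr z₁ z₂ z₃ = 0 := by
    intro a b c q
    have e : tr a b c * q * tr z₁ z₂ z₃ =
        tr a b (c * q) * tr z₁ z₂ z₃ - c * (tr a b q * tr z₁ z₂ z₃) := by
      unfold tr br; noncomm_ring
    rw [e, h, h]; simp
  have e : (br y₁ y₂ * br y₃ y₄ + br y₁ y₃ * br y₂ y₄) * p * tr z₁ z₂ z₃ =
      tr y₁ (y₂ * y₃) y₄ * p * tr z₁ z₂ z₃
      - tr y₁ y₂ y₄ * (y₃ * p) * tr z₁ z₂ z₃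
      - y₂ * (tr y₁ y₃ y₄ * p * tr z₁ z₂ z₃)
      - tr y₂ y₄ y₁ * (y₃ * p) * tr z₁ z₂ z₃
      + y₃ * (tr y₂ y₄ y₁ * p * tr z₁ z₂ z₃)
      + tr y₂ y₄ y₃ * (y₁ * p) * tr z₁ z₂ z₃
      - y₁ * (tr y₂ y₄ y₃ * p * tr z₁ z₂ z₃) := by
    unfold tr br; noncomm_ring
  rw [e]; simp [L]
end

section
/- Let R be an associative algebra over a field of characteristic 0 satisfying [x1,x2,x3][x4,x5,x6]=0 for all substitutions. Then for all y1,y2,y3, any p ∈ R, and all z1,z2,z3, one has 2·[y1,y2][y2,y3]·p·[z1,z2,z3]=0; in particular [y1,y2][y2,y3]·p·[z1,z2,z3]=0. -/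
/-- If an associative algebra over a field of characteristic zero satisfies
`[x1,x2,x3][x4,x5,x6] = 0`, then `2·[y1,y2][y2,y3]·p·[z1,z2,z3] = 0`;
in particular `[y1,y2][y2,y3]·p·[z1,z2,z3] = 0`. -/
theorem stmt2 {K R : Type*} [Field K] [CharZero K] [Ring R] [Algebra K R]
    (h : ∀ a₁ a₂ a₃ a₄ a₅ a₆ : R, tr a₁ a₂ a₃ * tr a₄ a₅ a₆ = 0)
    (y₁ y₂ y₃ p z₁ z₂ z₃ : R) :
    2 • (br y₁ y₂ * br y₂ y₃ * p * tr z₁ z₂ z₃) = 0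
    ∧ br y₁ y₂ * br y₂ y₃ * p * tr z₁ z₂ z₃ = 0 := by
  set c : R := tr z₁ z₂ z₃ with hc
  -- commutators commute with everything modulo right multiplication by `c`
  have hswap : ∀ a b x : R, br a b * x * c = x * (br a b * c) := by
    intro a b x
    have h0 := h a b x z₁ z₂ z₃
    rw [← hc] at h0
    simp only [tr, br] at h0
    simp only [br]
    have h1 : (a * b - b * a) * x * c - x * ((a * b - b * a) * c) = 0 := by
      calc (a * b - b * a) * x * c - x * ((a * b - b * a) * c)
          = ((a * b - b * a) * x - x * (a * b - b * a)) * c := by noncomm_ring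
        _ = 0 := h0
    exact sub_eq_zero.mp h1
  -- key identity: 2 • (br y₁ y₂ * br y₂ y₃ * c) = 0
  have key : 2 • (br y₁ y₂ * br y₂ y₃ * c) = 0 := by
    have h1 := h y₁ (y₂ * y₂) y₃ z₁ z₂ z₃
    have h2 := h y₁ y₂ y₃ z₁ z₂ z₃
    have h3 := h (br y₁ y₂) y₃ y₂ z₁ z₂ z₃
    have h4 := h y₂ y₃ (br y₁ y₂) z₁ z₂ z₃
    rw [← hc] at h1 h2 h3 h4
    simp only [tr, br] at h1 h2 h3 h4 ⊢
    have expand :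
        2 • ((y₁ * y₂ - y₂ * y₁) * (y₂ * y₃ - y₃ * y₂) * c)
          = ((y₁ * (y₂ * y₂) - y₂ * y₂ * y₁) * y₃
              - y₃ * (y₁ * (y₂ * y₂) - y₂ * y₂ * y₁)) * c
            - (((y₁ * y₂ - y₂ * y₁) * y₃ - y₃ * (y₁ * y₂ - y₂ * y₁)) * y₂
              - y₂ * ((y₁ * y₂ - y₂ * y₁) * y₃ - y₃ * (y₁ * y₂ - y₂ * y₁))) * c
            - ((y₂ * y₃ - y₃ * y₂) * (y₁ * y₂ - y₂ * y₁)
              - (y₁ * y₂ - y₂ * y₁) * (y₂ * y₃ - y₃ * y₂)) * c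
            - 2 • (y₂ * (((y₁ * y₂ - y₂ * y₁) * y₃
              - y₃ * (y₁ * y₂ - y₂ * y₁)) * c)) := by
      noncomm_ring
    rw [expand, h1, h3, h4, h2]
    simp
  -- move `p` out: br y₁ y₂ * br y₂ y₃ * p * c = p * (br y₁ y₂ * br y₂ y₃ * c)
  have hp : br y₁ y₂ * br y₂ y₃ * p * c = p * (br y₁ y₂ * br y₂ y₃ * c) := by
    calc br y₁ y₂ * br y₂ y₃ * p * c
        = br y₁ y₂ * (br y₂ y₃ * p) * c := by rw [mul_assoc (br y₁ y₂)]
      _ = br y₂ y₃ * p * (br y₁ y₂ * c) := hswap y₁ y₂ (br y₂ y₃ * p)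
      _ = br y₂ y₃ * (p * br y₁ y₂) * c := by noncomm_ring
      _ = p * br y₁ y₂ * (br y₂ y₃ * c) := hswap y₂ y₃ (p * br y₁ y₂)
      _ = p * (br y₁ y₂ * br y₂ y₃ * c) := by noncomm_ring
  have two : 2 • (br y₁ y₂ * br y₂ y₃ * p * c) = 0 := by
    rw [hp, ← mul_smul_comm, key, mul_zero]
  refine ⟨two, ?_⟩
  have hx : (2 : K) • (br y₁ y₂ * br y₂ y₃ * p * c) = 0 := by
    rw [show ((2 : K)) = ((2 : ℕ) : K) by norm_num, Nat.cast_smul_eq_nsmul]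
    exact two
  calc br y₁ y₂ * br y₂ y₃ * p * c
      = ((2 : K)⁻¹ * 2) • (br y₁ y₂ * br y₂ y₃ * p * c) := by norm_num
    _ = (2 : K)⁻¹ • ((2 : K) • (br y₁ y₂ * br y₂ y₃ * p * c)) := by rw [mul_smul]
    _ = 0 := by rw [hx, smul_zero]
end

section
/- Let R be an associative algebra over a field of characteristic zero satisfying the identity [x1,x2,x3][x4,x5,x6]=0. Then R satisfies ([y1,y2][y3,y4]+[y1,y3][y2,y4])·p·([z1,z2][z3,z4]+[z1,z3][z2,z4])=0 for all elements y_i, z_i, p ∈ R. -/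
/-- If an associative algebra over a field of characteristic zero satisfies
`[x1,x2,x3][x4,x5,x6] = 0`, then
`([y1,y2][y3,y4]+[y1,y3][y2,y4])·p·([z1,z2][z3,z4]+[z1,z3][z2,z4]) = 0`. -/
theorem stmt3 {K R : Type*} [Field K] [CharZero K] [Ring R] [Algebra K R]
    (h : ∀ a₁ a₂ a₃ a₄ a₅ a₆ : R, tr a₁ a₂ a₃ * tr a₄ a₅ a₆ = 0)
    (y₁ y₂ y₃ y₄ p z₁ z₂ z₃ z₄ : R) :
    (br y₁ y₂ * br y₃ y₄ + br y₁ y₃ * br y₂ y₄) * p *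
      (br z₁ z₂ * br z₃ z₄ + br z₁ z₃ * br z₂ z₄) = 0 := by
  -- Key lemma: a triple commutator times anything times a triple commutator is zero.
  have L1 : ∀ a b c r d e f : R, tr a b c * r * tr d e f = 0 := by
    intro a b c r d e f
    have e : tr a b c * r = tr a b (c * r) - c * tr a b r := by
      simp only [tr, br]; noncomm_ring
    rw [e, sub_mul, h, mul_assoc, h, mul_zero, sub_zero]
  -- Associativity variants of L1, in right-nested form.
  have G1 : ∀ a b c x d e f : R, tr a b c * (x * tr d e f) = 0 := by
    intro a b c x d e f
    simpa [mul_assoc] using L1 a b c x d e f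
  have G2 : ∀ a b c x y d e f : R, tr a b c * (x * (y * tr d e f)) = 0 := by
    intro a b c x y d e f
    simpa [mul_assoc] using L1 a b c (x * y) d e f
  have G3 : ∀ a b c x y z d e f : R, tr a b c * (x * (y * (z * tr d e f))) = 0 := by
    intro a b c x y z d e f
    simpa [mul_assoc] using L1 a b c (x * y * z) d e f
  -- Decompose the left factor into terms of the form `tr * r`.
  have e1 : br y₁ y₂ * br y₃ y₄ + br y₁ y₃ * br y₂ y₄ =
      tr y₁ (y₂ * y₃) y₄ - tr y₁ y₂ y₄ * y₃ - tr y₁ y₃ (y₂ * y₄) + tr y₁ y₃ y₂ * y₄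
        - tr (br y₂ y₄) y₁ y₃ + tr (br y₂ y₄) y₃ y₁ := by
    simp only [tr, br]; noncomm_ring
  -- Decompose the right factor into terms of the form `l * tr`.
  have e2 : br z₁ z₂ * br z₃ z₄ + br z₁ z₃ * br z₂ z₄ =
      tr z₁ (z₂ * z₃) z₄ - tr z₁ z₂ (z₄ * z₃) + z₄ * tr z₁ z₂ z₃ - z₂ * tr z₁ z₃ z₄
        - tr (br z₂ z₄) z₁ z₃ + tr (br z₂ z₄) z₃ z₁ := by
    simp only [tr, br]; noncomm_ring
  rw [e1, e2]
  simp only [add_mul, sub_mul, mul_add, mul_sub, mul_assoc, G1, G2, G3]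
  simp
end

section
/- Let G^{(2m)} be the Grassmann (exterior) algebra on a 2m-dimensional vector space over a field K of characteristic 0, and let UT2(G^{(2m)}) be the algebra of 2×2 upper triangular matrices over G^{(2m)}. Then UT2(G^{(2m)}) satisfies the polynomial identity [x1,x2][x3,x4]⋯[x_{2m+3},x_{2m+4}]=0, i.e., the product of any m+2 commutators of elements of UT2(G^{(2m)}) is zero. -/
/-!
Filter an algebra `A` generated by a submodule `V` by degree: `F k` is spanned by products of
at least `k` elements of `V`. Every element is a scalar modulo `F 1` and scalars are central, so
every commutator lies in `F 2`. In the Grassmann algebra `G^{(2m)}` we have `F (2m+1) = 0`. A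
product of `m+2` upper triangular matrices with diagonal in `F 2` has its diagonal in
`F (2m+4)` and its corner in `F (2m+2)`, hence vanishes.
-/

namespace Submodule

variable {R A : Type*} [CommRing R] [Ring A] [Algebra R A] (V : Submodule R A)

def powFiltration (k : ℕ) : Submodule R A := ⨆ i, V ^ (i + k)

theorem pow_le_powFiltration {i k : ℕ} (h : k ≤ i) : V ^ i ≤ V.powFiltration k := by
  obtain ⟨j, rfl⟩ := Nat.exists_eq_add_of_le' h
  exact le_iSup (fun j => V ^ (j + k)) j

theorem powFiltration_mul_le (a b : ℕ) :
    V.powFiltration a * V.powFiltration b ≤ V.powFiltration (a + b) := by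
  simp only [powFiltration, iSup_mul, mul_iSup, ← pow_add]
  exact iSup₂_le fun i j => V.pow_le_powFiltration (by omega)

theorem powFiltration_antitone : Antitone V.powFiltration :=
  fun _ _ h => iSup_le fun _ => V.pow_le_powFiltration (by omega)

theorem powFiltration_eq_bot {n k : ℕ} (hV : V ^ n = ⊥) (h : n ≤ k) :
    V.powFiltration k = ⊥ := by
  refine eq_bot_iff.2 (iSup_le fun i => ?_)
  rw [show i + k = n + (i + k - n) by omega, pow_add, hV, bot_mul]

theorem powFiltration_zero (hV : ⨆ i, V ^ i = ⊤) : V.powFiltration 0 = ⊤ := by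
  simpa [powFiltration] using hV

theorem one_sup_powFiltration_one : 1 ⊔ V.powFiltration 1 = ⨆ i, V ^ i := by
  rw [← sup_iSup_nat_succ, pow_zero]
  rfl

theorem mul_mem_powFiltration {a b c : ℕ} (h : c ≤ a + b) {x y : A}
    (hx : x ∈ V.powFiltration a) (hy : y ∈ V.powFiltration b) : x * y ∈ V.powFiltration c :=
  V.powFiltration_antitone h (V.powFiltration_mul_le a b (mul_mem_mul hx hy))

theorem br_mem_powFiltration_two (hV : ⨆ i, V ^ i = ⊤) (x y : A) :
    br x y ∈ V.powFiltration 2 := by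
  have hsplit : ∀ z : A, ∃ c : R, z - algebraMap R A c ∈ V.powFiltration 1 := by
    intro z
    have hz : z ∈ 1 ⊔ V.powFiltration 1 := by
      rw [one_sup_powFiltration_one, hV]; exact mem_top
    obtain ⟨s, hs, t, ht, rfl⟩ := mem_sup.1 hz
    obtain ⟨c, rfl⟩ := mem_one.1 hs
    exact ⟨c, by rwa [add_sub_cancel_left]⟩
  obtain ⟨c, hx⟩ := hsplit x
  obtain ⟨d, hy⟩ := hsplit y
  have hbr : br x y = br (x - algebraMap R A c) (y - algebraMap R A d) := by
    simp only [br, sub_mul, mul_sub]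
    rw [Algebra.commutes c y, Algebra.commutes d x, ← map_mul, ← map_mul, mul_comm c d]
    abel
  rw [hbr]
  exact sub_mem (V.mul_mem_powFiltration (by norm_num) hx hy)
    (V.mul_mem_powFiltration (by norm_num) hy hx)

theorem list_prod_mem_powFiltration (hV : ⨆ i, V ^ i = ⊤) (L : List (Matrix (Fin 2) (Fin 2) A))
    (hL : ∀ M ∈ L, M 1 0 = 0 ∧ M 0 0 ∈ V.powFiltration 2 ∧ M 1 1 ∈ V.powFiltration 2) :
    L.prod 1 0 = 0 ∧ L.prod 0 0 ∈ V.powFiltration (2 * L.length) ∧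
      L.prod 1 1 ∈ V.powFiltration (2 * L.length) ∧
      L.prod 0 1 ∈ V.powFiltration (2 * L.length - 2) := by
  have hF0 (x : A) : x ∈ V.powFiltration 0 := by simp [V.powFiltration_zero hV]
  induction L with
  | nil => simp [hF0]
  | cons M L ih =>
    obtain ⟨hM10, hM00, hM11⟩ := hL M List.mem_cons_self
    obtain ⟨hP10, hP00, hP11, hP01⟩ := ih fun N hN => hL N (List.mem_cons_of_mem _ hN)
    simp only [List.prod_cons, List.length_cons, Matrix.mul_apply, Fin.sum_univ_two, hM10, hP10,
      zero_mul, mul_zero, add_zero, zero_add, true_and]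
    exact ⟨V.mul_mem_powFiltration (by omega) hM00 hP00,
      V.mul_mem_powFiltration (by omega) hM11 hP11,
      add_mem (V.mul_mem_powFiltration (by omega) hM00 hP01)
        (V.mul_mem_powFiltration (by omega) (hF0 _) hP11)⟩

end Submodule

namespace Matrix

variable {A : Type*} [Ring A]

theorem br_apply_of_upperTriangular {M N : Matrix (Fin 2) (Fin 2) A} (hM : M 1 0 = 0)
    (hN : N 1 0 = 0) :
    br M N 1 0 = 0 ∧ br M N 0 0 = br (M 0 0) (N 0 0) ∧ br M N 1 1 = br (M 1 1) (N 1 1) := by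
  simp [br, mul_apply, Fin.sum_univ_two, hM, hN]

end Matrix

namespace ExteriorAlgebra

variable {R M : Type*} [CommRing R] [AddCommGroup M] [Module R M]

theorem iSup_range_ι_pow_eq_top : ⨆ i, LinearMap.range (ι R (M := M)) ^ i = ⊤ :=
  (DirectSum.Decomposition.isInternal fun i : ℕ => ⋀[R]^i M).submodule_iSup_eq_top

theorem range_ι_pow_eq_bot {K V : Type*} [Field K] [AddCommGroup V] [Module K V]
    [FiniteDimensional K V] {n : ℕ} (h : Module.finrank K V < n) :
    LinearMap.range (ι K (M := V)) ^ n = ⊥ := by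
  rw [← Submodule.finrank_eq_zero, ← exteriorPower, exteriorPower.finrank_eq,
    Nat.choose_eq_zero_of_lt h]

end ExteriorAlgebra

theorem stmt4_general {K : Type*} [Field K] (m : ℕ)
    (a : ℕ → Matrix (Fin 2) (Fin 2) (ExteriorAlgebra K (Fin (2 * m) → K)))
    (ha : ∀ i, a i 1 0 = 0) :
    (List.ofFn (fun i : Fin (m + 2) => br (a (2 * i)) (a (2 * i + 1)))).prod = 0 := by
  set V := LinearMap.range (ExteriorAlgebra.ι K (M := Fin (2 * m) → K))
  have hV : ⨆ i, V ^ i = ⊤ := ExteriorAlgebra.iSup_range_ι_pow_eq_top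
  have hnil : V ^ (2 * m + 1) = ⊥ := ExteriorAlgebra.range_ι_pow_eq_bot (by simp)
  have hcomm : ∀ M ∈ List.ofFn (fun i : Fin (m + 2) => br (a (2 * i)) (a (2 * i + 1))),
      M 1 0 = 0 ∧ M 0 0 ∈ V.powFiltration 2 ∧ M 1 1 ∈ V.powFiltration 2 := by
    simp only [List.mem_ofFn, forall_exists_index]
    rintro _ i rfl
    obtain ⟨h10, h00, h11⟩ := Matrix.br_apply_of_upperTriangular (ha (2 * i)) (ha (2 * i + 1))
    exact ⟨h10, h00 ▸ V.br_mem_powFiltration_two hV _ _,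
      h11 ▸ V.br_mem_powFiltration_two hV _ _⟩
  obtain ⟨h10, h00, h11, h01⟩ := V.list_prod_mem_powFiltration hV _ hcomm
  simp only [List.length_ofFn, Submodule.mem_bot,
    V.powFiltration_eq_bot hnil (by omega : 2 * m + 1 ≤ 2 * (m + 2)),
    V.powFiltration_eq_bot hnil (by omega : 2 * m + 1 ≤ 2 * (m + 2) - 2)] at h00 h11 h01
  ext i j
  fin_cases i <;> fin_cases j <;> assumption

/-- The algebra `UT2(G^{(2m)})` of upper triangular `2×2` matrices over the Grassmann algebra
of a `2m`-dimensional vector space over a field of characteristic zero satisfies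
`[x1,x2][x3,x4]⋯[x_{2m+3},x_{2m+4}] = 0`: every product of `m+2` commutators vanishes. -/
theorem stmt4 {K : Type*} [Field K] [CharZero K] (m : ℕ)
    (a : ℕ → Matrix (Fin 2) (Fin 2) (ExteriorAlgebra K (Fin (2 * m) → K)))
    (ha : ∀ i, a i 1 0 = 0) :
    (List.ofFn (fun i : Fin (m + 2) => br (a (2 * i)) (a (2 * i + 1)))).prod = 0 :=
  stmt4_general m a ha
end

section
/- Let G^{(2m)} be the Grassmann algebra of a 2m-dimensional vector space over a field of characteristic 0. Then UT2(G^{(2m)}) satisfies the identity [x1,x2,x3][x4,x5,x6]=0, where [a,b]=ab−ba and [a,b,c]=[[a,b],c]. -/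
section Grassmann

variable {R M : Type*} [CommRing R] [AddCommGroup M] [Module R M]

open ExteriorAlgebra

/-- `x` commutes with all generators. -/
def CommGen (x : ExteriorAlgebra R M) : Prop := ∀ v : M, ι R v * x = x * ι R v

/-- `x` anticommutes with all generators. -/
def AntiGen (x : ExteriorAlgebra R M) : Prop := ∀ v : M, ι R v * x = -(x * ι R v)

theorem central_of_commGen {x : ExteriorAlgebra R M} (hx : CommGen x)
    (y : ExteriorAlgebra R M) : y * x = x * y := by
  induction y using ExteriorAlgebra.induction with
  | algebraMap r => rw [Algebra.commutes]
  | ι v => exact hx v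
  | mul a b ha hb => rw [mul_assoc, hb, ← mul_assoc, ha, mul_assoc]
  | add a b ha hb => rw [add_mul, mul_add, ha, hb]

theorem decomp (a : ExteriorAlgebra R M) :
    ∃ e o : ExteriorAlgebra R M, a = e + o ∧ CommGen e ∧ AntiGen o := by
  induction a using ExteriorAlgebra.induction with
  | algebraMap r =>
    exact ⟨_, 0, (add_zero _).symm, fun v => (Algebra.commutes r _).symm,
      fun v => by simp⟩
  | ι w =>
    refine ⟨0, ι R w, (zero_add _).symm, fun v => by simp, fun v => ?_⟩
    exact eq_neg_of_add_eq_zero_left (ι_add_mul_swap v w)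
  | mul a b ha hb =>
    obtain ⟨e, o, rfl, he, ho⟩ := ha
    obtain ⟨e', o', rfl, he', ho'⟩ := hb
    refine ⟨e * e' + o * o', e * o' + o * e', by noncomm_ring, fun v => ?_, fun v => ?_⟩
    · have h1 : ι R v * (e * e') = e * e' * ι R v := by
        rw [← mul_assoc, he, mul_assoc, he', mul_assoc]
      have h2 : ι R v * (o * o') = o * o' * ι R v := by
        rw [← mul_assoc, ho, neg_mul, mul_assoc, ho', mul_neg, neg_neg, mul_assoc]
      rw [mul_add, add_mul, h1, h2]
    · have h1 : ι R v * (e * o') = -(e * o' * ι R v) := by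
        rw [← mul_assoc, he, mul_assoc, ho', mul_neg, mul_assoc]
      have h2 : ι R v * (o * e') = -(o * e' * ι R v) := by
        rw [← mul_assoc, ho, neg_mul, mul_assoc, he', mul_assoc]
      rw [mul_add, add_mul, h1, h2, neg_add]
  | add a b ha hb =>
    obtain ⟨e, o, rfl, he, ho⟩ := ha
    obtain ⟨e', o', rfl, he', ho'⟩ := hb
    refine ⟨e + e', o + o', by abel, fun v => ?_, fun v => ?_⟩
    · rw [mul_add, add_mul, he, he']
    · rw [mul_add, add_mul, ho, ho', neg_add]

/-- Commutators in the exterior algebra are central. -/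
theorem br_central (a b y : ExteriorAlgebra R M) : y * br a b = br a b * y := by
  obtain ⟨e, o, rfl, he, ho⟩ := decomp a
  obtain ⟨e', o', rfl, he', ho'⟩ := decomp b
  have c1 : e' * e = e * e' := central_of_commGen he e'
  have c2 : e' * o = o * e' := (central_of_commGen he' o).symm
  have c3 : o' * e = e * o' := central_of_commGen he o'
  have key : br (e + o) (e' + o') = o * o' - o' * o := by
    unfold br
    calc (e + o) * (e' + o') - (e' + o') * (e + o)
        = (e * e' - e' * e) + (e * o' - o' * e) + (o * e' - e' * o) + (o * o' - o' * o) := by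
          noncomm_ring
      _ = o * o' - o' * o := by rw [c1, c2, c3]; abel
  rw [key]
  have hc : CommGen (o * o' - o' * o) := by
    intro v
    have h2 : ι R v * (o * o') = o * o' * ι R v := by
      rw [← mul_assoc, ho, neg_mul, mul_assoc, ho', mul_neg, neg_neg, mul_assoc]
    have h3 : ι R v * (o' * o) = o' * o * ι R v := by
      rw [← mul_assoc, ho', neg_mul, mul_assoc, ho, mul_neg, neg_neg, mul_assoc]
    rw [mul_sub, sub_mul, h2, h3]
  exact central_of_commGen hc y

/-- Triple commutators in the exterior algebra vanish. -/
theorem tr_zero (a b c : ExteriorAlgebra R M) : tr a b c = 0 := by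
  show br a b * c - c * br a b = 0
  rw [br_central a b c, sub_self]

end Grassmann

/-- The algebra `UT2(G^{(2m)})` of upper triangular `2×2` matrices over the Grassmann algebra
of a `2m`-dimensional vector space over a field of characteristic zero satisfies the identity
`[x1,x2,x3][x4,x5,x6] = 0`. -/
theorem stmt5 {K : Type*} [Field K] [CharZero K] (m : ℕ)
    (a₁ a₂ a₃ a₄ a₅ a₆ : Matrix (Fin 2) (Fin 2) (ExteriorAlgebra K (Fin (2 * m) → K)))
    (h₁ : a₁ 1 0 = 0) (h₂ : a₂ 1 0 = 0) (h₃ : a₃ 1 0 = 0)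
    (h₄ : a₄ 1 0 = 0) (h₅ : a₅ 1 0 = 0) (h₆ : a₆ 1 0 = 0) :
    tr a₁ a₂ a₃ * tr a₄ a₅ a₆ = 0 := by
  -- entries of triple commutator of upper triangular matrices
  have key : ∀ a b c : Matrix (Fin 2) (Fin 2) (ExteriorAlgebra K (Fin (2 * m) → K)), a 1 0 = 0 → b 1 0 = 0 → c 1 0 = 0 →
      tr a b c 0 0 = 0 ∧ tr a b c 1 0 = 0 ∧ tr a b c 1 1 = 0 := by
    intro a b c ha hb hc
    have e00 : ∀ x y : Matrix (Fin 2) (Fin 2) (ExteriorAlgebra K (Fin (2 * m) → K)), x 1 0 = 0 → y 1 0 = 0 →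
        (br x y) 0 0 = br (x 0 0) (y 0 0) := by
      intro x y hx hy
      simp [br, Matrix.sub_apply, Matrix.mul_apply, Fin.sum_univ_two, hx, hy]
    have e11 : ∀ x y : Matrix (Fin 2) (Fin 2) (ExteriorAlgebra K (Fin (2 * m) → K)), x 1 0 = 0 → y 1 0 = 0 →
        (br x y) 1 1 = br (x 1 1) (y 1 1) := by
      intro x y hx hy
      simp [br, Matrix.sub_apply, Matrix.mul_apply, Fin.sum_univ_two, hx, hy]
    have e10 : ∀ x y : Matrix (Fin 2) (Fin 2) (ExteriorAlgebra K (Fin (2 * m) → K)), x 1 0 = 0 → y 1 0 = 0 →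
        (br x y) 1 0 = 0 := by
      intro x y hx hy
      simp [br, Matrix.sub_apply, Matrix.mul_apply, Fin.sum_univ_two, hx, hy]
    have hab : (br a b) 1 0 = 0 := e10 a b ha hb
    refine ⟨?_, e10 _ c hab hc, ?_⟩
    · show (br (br a b) c) 0 0 = 0
      rw [e00 _ c hab hc, e00 a b ha hb]
      exact tr_zero (a 0 0) (b 0 0) (c 0 0)
    · show (br (br a b) c) 1 1 = 0
      rw [e11 _ c hab hc, e11 a b ha hb]
      exact tr_zero (a 1 1) (b 1 1) (c 1 1)
  obtain ⟨p00, p10, p11⟩ := key a₁ a₂ a₃ h₁ h₂ h₃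
  obtain ⟨q00, q10, q11⟩ := key a₄ a₅ a₆ h₄ h₅ h₆
  ext i j
  rw [Matrix.mul_apply, Fin.sum_univ_two]
  fin_cases i <;> fin_cases j <;>
    simp [p00, p10, p11, q00, q10, q11]
end

section
/- In the Grassmann algebra G^{(2m)} of a 2m-dimensional vector space over a field of characteristic 0, any product of elements containing at least m+1 factors that are commutators is zero: if c_1,…,c_{m+1} are commutators [a_i,b_i] and w_0,…,w_{m+1} are arbitrary elements, then w_0 c_1 w_1 c_2 ⋯ c_{m+1} w_{m+1} = 0. -/
/-!
Filter the exterior algebra by `J k = filtration k`, the span of all products of at least `k`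
vectors; then `J p * J q ≤ J (p + q)`. Every element is a scalar plus an element of `J 1`, and scalars are
central, so a commutator `[a, b]` equals a commutator of two elements of `J 1` and lies in `J 2`.
Hence a product with `m + 1` commutator factors lies in `J (2m + 2)`, which is zero because
products of more than `dim M = 2m` vectors vanish.
-/

open ExteriorAlgebra

namespace ExteriorAlgebra

section CommRing

variable (R : Type*) [CommRing R] (M : Type*) [AddCommGroup M] [Module R M]

noncomputable def filtration (k : ℕ) : Submodule R (ExteriorAlgebra R M) :=
  ⨆ i, ⋀[R]^(i + k) M

variable {R M}

theorem exteriorPower_le_filtration {i k : ℕ} (h : k ≤ i) : ⋀[R]^i M ≤ filtration R M k := by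
  obtain ⟨j, rfl⟩ := Nat.exists_eq_add_of_le' h
  exact le_iSup (fun j => ⋀[R]^(j + k) M) j

theorem filtration_antitone : Antitone (filtration R M) := fun _ _ h =>
  iSup_le fun _ => exteriorPower_le_filtration (by omega)

theorem filtration_mul_le (p q : ℕ) :
    filtration R M p * filtration R M q ≤ filtration R M (p + q) := by
  simp only [filtration, Submodule.iSup_mul, Submodule.mul_iSup]
  refine iSup_le fun i => iSup_le fun j => ?_
  rw [← pow_add]
  exact exteriorPower_le_filtration (by omega)

theorem filtration_zero : filtration R M 0 = ⊤ :=
  (DirectSum.Decomposition.isInternal (fun i : ℕ => ⋀[R]^i M)).submodule_iSup_eq_top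

theorem mem_filtration_zero (x : ExteriorAlgebra R M) : x ∈ filtration R M 0 :=
  filtration_zero (R := R) (M := M) ▸ Submodule.mem_top

instance : SetLike.GradedMonoid (filtration R M) where
  one_mem := mem_filtration_zero 1
  mul_mem p q _ _ hx hy := filtration_mul_le p q (Submodule.mul_mem_mul hx hy)

theorem one_sup_filtration_one : 1 ⊔ filtration R M 1 = ⊤ := by
  rw [← filtration_zero, ← pow_zero (LinearMap.range (ι R : M →ₗ[R] ExteriorAlgebra R M))]
  exact sup_iSup_nat_succ fun i => ⋀[R]^i M

theorem exists_algebraMap_add_mem_filtration_one (x : ExteriorAlgebra R M) :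
    ∃ (r : R) (y : ExteriorAlgebra R M), y ∈ filtration R M 1 ∧ x = algebraMap R _ r + y := by
  have hx : x ∈ 1 ⊔ filtration R M 1 := one_sup_filtration_one (R := R) (M := M) ▸ Submodule.mem_top
  obtain ⟨_, hr, y, hy, rfl⟩ := Submodule.mem_sup.1 hx
  obtain ⟨r, rfl⟩ := Submodule.mem_one.1 hr
  exact ⟨r, y, hy, rfl⟩

theorem br_mem_filtration_two (a b : ExteriorAlgebra R M) : br a b ∈ filtration R M 2 := by
  obtain ⟨r, y, hy, rfl⟩ := exists_algebraMap_add_mem_filtration_one a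
  obtain ⟨s, z, hz, rfl⟩ := exists_algebraMap_add_mem_filtration_one b
  have hbr : br (algebraMap R _ r + y) (algebraMap R _ s + z) = y * z - z * y := by
    simp only [br, add_mul, mul_add, Algebra.commutes, ← map_mul, mul_comm r s]
    abel
  rw [hbr]
  exact sub_mem (SetLike.mul_mem_graded (i := 1) (j := 1) hy hz)
    (SetLike.mul_mem_graded (i := 1) (j := 1) hz hy)

end CommRing

theorem filtration_eq_bot_of_finrank_lt {K M : Type*} [Field K] [AddCommGroup M] [Module K M]
    [FiniteDimensional K M] {k : ℕ} (hk : Module.finrank K M < k) : filtration K M k = ⊥ := by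
  refine eq_bot_iff.2 (iSup_le fun i => eq_bot_iff.1 ?_)
  rw [← Submodule.finrank_eq_zero, exteriorPower.finrank_eq]
  exact Nat.choose_eq_zero_of_lt (by omega)

end ExteriorAlgebra

theorem stmt7_general {K : Type*} [Field K] (m : ℕ)
    (a b w : ℕ → ExteriorAlgebra K (Fin (2 * m) → K)) :
    w 0 * (List.ofFn (fun i : Fin (m + 1) => br (a i) (b i) * w (i + 1))).prod = 0 := by
  have hfactor (i : Fin (m + 1)) : br (a i) (b i) * w (i + 1) ∈ filtration K _ (2 + 0) :=
    SetLike.mul_mem_graded (br_mem_filtration_two _ _) (mem_filtration_zero _)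
  have hprod := SetLike.mul_mem_graded (mem_filtration_zero (w 0))
    (SetLike.list_prod_ofFn_mem_graded _ _ hfactor)
  have hvanish : filtration K (Fin (2 * m) → K) (2 * m + 1) = ⊥ :=
    filtration_eq_bot_of_finrank_lt (by simp)
  have hle : 2 * m + 1 ≤ 0 + (List.ofFn fun _ : Fin (m + 1) => 2 + 0).sum := by
    simp only [add_zero, zero_add, List.ofFn_const, List.sum_replicate, smul_eq_mul]; omega
  simpa [hvanish] using filtration_antitone hle hprod

/-- In the Grassmann algebra `G^{(2m)}` of a `2m`-dimensional vector space over a field of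
characteristic zero, any product containing at least `m+1` commutator factors vanishes:
`w₀·[a₁,b₁]·w₁·[a₂,b₂]·w₂ ⋯ [a_{m+1},b_{m+1}]·w_{m+1} = 0`. -/
theorem stmt7 {K : Type*} [Field K] [CharZero K] (m : ℕ)
    (a b w : ℕ → ExteriorAlgebra K (Fin (2 * m) → K)) :
    w 0 * (List.ofFn (fun i : Fin (m + 1) => br (a i) (b i) * w (i + 1))).prod = 0 :=
  stmt7_general m a b w
end

section
/- Let R be an associative algebra over a field of characteristic 0 satisfying [x1,x2,x3][x4,x5,x6]=0. For any u_0,…,u_{n+1}, v_1,v_2,v_3, w_1,…,w_{2n} ∈ R and any permutation σ of {1,…,2n}, one has u_0[v_1,v_2,v_3]u_1[w_{σ(1)},w_{σ(2)}]u_2⋯u_n[w_{σ(2n−1)},w_{σ(2n)}]u_{n+1} = sgn(σ)·u_0[v_1,v_2,v_3][w_1,w_2]⋯[w_{2n−1},w_{2n}]·u_1⋯u_{n+1}. -/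
/-!
Put `m = u₀ [v₁,v₂,v₃]`. The identity `[x₁,x₂,x₃][x₄,x₅,x₆] = 0` makes every commutator central
once it is preceded by `m x`: `m x [a,b] y = m x y [a,b]`. So the `u_i` can be pushed to the right
past all the commutators, and it remains to see that `m [w₁,w₂]⋯[w_{2n-1},w_{2n}]` is alternating
in `w`. Adjacent transpositions generate the symmetric group, and such a transposition either swaps
the two entries of one commutator or turns `m [a,b][c,d]` into `m [a,c][b,d] = -m [a,b][c,d]`.
-/

theorem Fin.two_mul_val_lt {n : ℕ} (i : Fin n) : 2 * (i : ℕ) < 2 * n := by omega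

theorem Fin.two_mul_val_add_one_lt {n : ℕ} (i : Fin n) : 2 * (i : ℕ) + 1 < 2 * n := by omega

theorem comp_swap_shift_two {α : Type*} {n : ℕ} (w : Fin (2 * (n + 1)) → α) (k : ℕ)
    (hk : k + 3 < 2 * (n + 1)) :
    (fun j : Fin (2 * n) => (w ∘ Equiv.swap ⟨k + 2, by omega⟩ ⟨k + 3, hk⟩) ⟨j + 2, by omega⟩) =
      (fun j : Fin (2 * n) => w ⟨j + 2, by omega⟩) ∘
        Equiv.swap ⟨k, by omega⟩ ⟨k + 1, by omega⟩ := by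
  funext j
  simp only [Function.comp_apply, Equiv.swap_apply_def, Fin.ext_iff]
  split_ifs <;> first | rfl | omega

section

variable {R : Type*} [Ring R]

theorem br_swap (a b : R) : br b a = -br a b := by
  simp only [br]; noncomm_ring

def centralAfter (m : R) : Submonoid R where
  carrier := {c | ∀ x y, m * x * (c * y) = m * x * (y * c)}
  one_mem' := by simp
  mul_mem' {c d} hc hd x y := by
    linear_combination (norm := noncomm_ring) hc x (d * y) + hd x (y * c)

theorem centralAfter_le_mul_right (m z : R) : centralAfter m ≤ centralAfter (m * z) :=
  fun c hc x y => by simpa only [mul_assoc] using hc (z * x) y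

theorem centralAfter_le_mul_left (m z : R) : centralAfter m ≤ centralAfter (z * m) :=
  fun c hc x y => by simpa only [mul_assoc] using congrArg (z * ·) (hc x y)

def BrCentralAfter (m : R) : Prop := ∀ a b : R, br a b ∈ centralAfter m

-- `[c, x y] = [c, x] y + x [c, y]` for `c = [a, b]`, and `[v₁,v₂,v₃]` kills `[c, x y]`, `[c, x]`.
theorem brCentralAfter_tr (hPI : ∀ a₁ a₂ a₃ a₄ a₅ a₆ : R, tr a₁ a₂ a₃ * tr a₄ a₅ a₆ = 0)
    (v₁ v₂ v₃ : R) : BrCentralAfter (tr v₁ v₂ v₃) := by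
  intro a b x y
  have h₁ := hPI v₁ v₂ v₃ a b (x * y)
  have h₂ := hPI v₁ v₂ v₃ a b x
  simp only [tr, br] at h₁ h₂ ⊢
  linear_combination (norm := noncomm_ring) h₁ - h₂ * y

def pairProd {n : ℕ} (w : Fin (2 * n) → R) : R :=
  (List.ofFn fun i : Fin n =>
    br (w ⟨2 * i, Fin.two_mul_val_lt i⟩) (w ⟨2 * i + 1, Fin.two_mul_val_add_one_lt i⟩)).prod

theorem pairProd_succ {n : ℕ} (w : Fin (2 * (n + 1)) → R) :
    pairProd w = br (w ⟨0, by omega⟩) (w ⟨1, by omega⟩) *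
      pairProd (fun j : Fin (2 * n) => w ⟨j + 2, by omega⟩) := by
  rw [pairProd, List.ofFn_succ, List.prod_cons]
  rfl

namespace BrCentralAfter

variable {m : R} (hm : BrCentralAfter m)
include hm

theorem mul_right (z : R) : BrCentralAfter (m * z) :=
  fun a b => centralAfter_le_mul_right m z (hm a b)

theorem mul_left (z : R) : BrCentralAfter (z * m) :=
  fun a b => centralAfter_le_mul_left m z (hm a b)

-- Compute `m d [a, b c]` in two ways, expanding `[a, b c] = [a, b] c + b [a, c]` before and after
-- moving `d` across it.
theorem mul_br_mul_br_swap (a b c d : R) :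
    m * (br a c * br b d) = -(m * (br a b * br c d)) := by
  have h₀ := hm a (b * c) 1 d
  have h₁ := hm a b 1 (c * d)
  have h₂ := hm a c b d
  have h₃ := hm a b d c
  have h₄ := hm c d 1 (br a b)
  have h₅ := hm b d 1 (br a c)
  simp only [br] at h₀ h₁ h₂ h₃ h₄ h₅ ⊢
  linear_combination (norm := noncomm_ring) h₀ - h₁ - h₂ + h₃ - h₄ - h₅

theorem mul_pairProd_comp_swap {n : ℕ} (w : Fin (2 * n) → R) (k : ℕ) (hk : k + 1 < 2 * n) :
    m * pairProd (w ∘ Equiv.swap ⟨k, by omega⟩ ⟨k + 1, hk⟩) = -(m * pairProd w) := by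
  induction n generalizing m k with
  | zero => omega
  | succ n ih =>
    rcases k with _ | _ | k
    · simp only [pairProd_succ, Function.comp_apply, Equiv.swap_apply_def, Fin.mk.injEq,
        Nat.reduceAdd, Nat.reduceEqDiff, ite_true, ite_false]
      rw [br_swap, neg_mul, mul_neg]
    · rcases n with _ | n
      · omega
      simp only [pairProd_succ, Function.comp_apply, Equiv.swap_apply_def, Fin.mk.injEq,
        Nat.add_assoc, Nat.reduceAdd, Nat.reduceEqDiff, ite_true, ite_false]
      simp only [← mul_assoc]
      rw [mul_assoc m, hm.mul_br_mul_br_swap, ← mul_assoc m, neg_mul]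
    -- The first commutator is untouched and is absorbed into `m`.
    · show m * pairProd (w ∘ Equiv.swap ⟨k + 2, by omega⟩ ⟨k + 3, hk⟩) = _
      rw [pairProd_succ, pairProd_succ, comp_swap_shift_two, ← mul_assoc, ← mul_assoc]
      simp only [Function.comp_apply]
      rw [Equiv.swap_apply_of_ne_of_ne (by simp) (by simp),
        Equiv.swap_apply_of_ne_of_ne (by simp) (by simp)]
      exact ih (hm.mul_right _) _ k _

theorem mul_pairProd_comp_perm {n : ℕ} (σ : Equiv.Perm (Fin (2 * n))) (w : Fin (2 * n) → R) :
    m * pairProd (w ∘ σ) = (Equiv.Perm.sign σ : ℤ) • (m * pairProd w) := by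
  rcases n with _ | n
  · obtain rfl : σ = 1 := Equiv.ext fun i => absurd i.isLt (by omega)
    simp
  have hσ : σ ∈ Submonoid.closure
      (Set.range fun i : Fin (2 * n + 1) => Equiv.swap i.castSucc i.succ) := by
    rw [Equiv.Perm.mclosure_swap_castSucc_succ]; trivial
  induction hσ using Submonoid.closure_induction generalizing w with
  | mem _ h =>
    obtain ⟨i, rfl⟩ := h
    rw [Equiv.Perm.sign_swap (Fin.castSucc_lt_succ (i := i)).ne, Units.val_neg, Units.val_one,
      neg_one_smul]
    exact hm.mul_pairProd_comp_swap w i (by omega)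
  | one => simp
  | mul σ τ _ _ hσ hτ =>
    rw [Equiv.Perm.coe_mul, ← Function.comp_assoc, hτ, hσ, Equiv.Perm.sign_mul, Units.val_mul,
      mul_smul, smul_comm]

end BrCentralAfter

theorem mul_prod_map_mul_of_mem_centralAfter {ι : Type*} (l : List ι) (a c : ι → R) {m : R}
    (hc : ∀ i ∈ l, c i ∈ centralAfter m) :
    m * (l.map fun i => a i * c i).prod = m * ((l.map c).prod * (l.map a).prod) := by
  induction l generalizing m with
  | nil => simp
  | cons i l ih =>
    have hC : c i * (l.map c).prod ∈ centralAfter m :=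
      mul_mem (hc i (by simp))
        (Submonoid.list_prod_mem _ (by simpa using fun j hj => hc j (by simp [hj])))
    have ih' := ih fun j hj => centralAfter_le_mul_right m (a i * c i) (hc j (by simp [hj]))
    simp only [List.map_cons, List.prod_cons]
    calc m * (a i * c i * (l.map fun i => a i * c i).prod)
        = m * (a i * c i) * (l.map fun i => a i * c i).prod := by simp only [mul_assoc]
      _ = m * a i * (c i * (l.map c).prod * (l.map a).prod) := by rw [ih']; noncomm_ring
      _ = m * a i * ((l.map a).prod * (c i * (l.map c).prod)) := hC _ _
      _ = m * 1 * ((a i * (l.map a).prod) * (c i * (l.map c).prod)) := by noncomm_ring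
      _ = m * (c i * (l.map c).prod * (a i * (l.map a).prod)) := by rw [← hC, mul_one]

end

/-- In an associative algebra over a field of characteristic zero satisfying
`[x1,x2,x3][x4,x5,x6] = 0`, for `n ≥ 1`, any `u₀,…,u_{n+1}`, `v₁,v₂,v₃`, `w₁,…,w_{2n}` and
any permutation `σ` of `{1,…,2n}`:
`u₀[v₁,v₂,v₃]u₁[w_{σ(1)},w_{σ(2)}]u₂⋯u_n[w_{σ(2n-1)},w_{σ(2n)}]u_{n+1}
  = sgn(σ)·u₀[v₁,v₂,v₃][w₁,w₂]⋯[w_{2n-1},w_{2n}]u₁⋯u_{n+1}`. -/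
theorem stmt14 {R : Type*} [Ring R]
    (hPI : ∀ a₁ a₂ a₃ a₄ a₅ a₆ : R, tr a₁ a₂ a₃ * tr a₄ a₅ a₆ = 0)
    (n : ℕ) (u : ℕ → R) (v₁ v₂ v₃ : R)
    (w : Fin (2 * n) → R) (σ : Equiv.Perm (Fin (2 * n))) :
    u 0 * tr v₁ v₂ v₃ *
        (List.ofFn (fun i : Fin n =>
          u (i + 1) *
            br (w (σ ⟨2 * i, by omega⟩)) (w (σ ⟨2 * i + 1, by omega⟩)))).prod *
      u (n + 1)
    = (Equiv.Perm.sign σ : ℤ) •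
        (u 0 * tr v₁ v₂ v₃ *
          (List.ofFn (fun i : Fin n =>
            br (w ⟨2 * i, by omega⟩) (w ⟨2 * i + 1, by omega⟩))).prod *
          (List.ofFn (fun i : Fin (n + 1) => u (i + 1))).prod) := by
  set m := u 0 * tr v₁ v₂ v₃
  have hm : BrCentralAfter m := (brCentralAfter_tr hPI v₁ v₂ v₃).mul_left (u 0)
  have hpull := mul_prod_map_mul_of_mem_centralAfter (List.finRange n) (fun i => u (i + 1))
    (fun i => br (w (σ ⟨2 * i, by omega⟩)) (w (σ ⟨2 * i + 1, by omega⟩))) (fun i _ => hm _ _)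
  have hsign := hm.mul_pairProd_comp_perm σ w
  simp only [← List.ofFn_eq_map] at hpull
  simp only [pairProd, Function.comp_apply] at hsign
  rw [hpull, ← mul_assoc m, hsign, List.ofFn_succ', List.prod_concat]
  simp only [smul_mul_assoc, mul_assoc, Fin.val_last, Fin.val_castSucc]
end

section
/- Let m ≥ 1 and K a field of characteristic 0. In the algebra UT2(G) of 2×2 upper triangular matrices over the infinite-dimensional Grassmann algebra G, consider any elements ξ_1,…,ξ_{2m+1} (so any (2m+1)-generated subalgebra). Then the subalgebra they generate satisfies the identity [x1,x2,x3][x4,x5]⋯[x_{2m+4},x_{2m+5}] = 0; concretely, for any elements a_1,…,a_{2m+5} of the subalgebra generated by ξ_1,…,ξ_{2m+1}, the product [a1,a2,a3][a4,a5]⋯[a_{2m+4},a_{2m+5}] is 0. -/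
/-!
Upper triangular matrices have multiplicative diagonals, so the diagonal entries of
`T = [a₀,a₁,a₂]` are triple commutators in `G`; these vanish because commutators in `G` are even,
hence central. So `T` has zero first column, and `T * F = 0` once the second row of the upper
triangular `F = [a₃,a₄]⋯[a_{2m+3},a_{2m+4}]` vanishes, i.e. once its `(1,1)` entry does. That entry is a product of `m + 1` commutators in the
subalgebra of `G` generated by the `2m+1` diagonal entries `yⱼ = eⱼ + oⱼ` (even plus odd part).
Since even elements are central, this subalgebra lies in `Z + P`, where `Z` is the centre of `G`
and `P` the `Z`-span of the `oⱼ`. Commutators of elements of `Z + P` lie in `P²`, and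
`P ^ (2m+2) = 0`: a product of `2m+2` of the `oⱼ` repeats one of them, and odd elements
anticommute and square to zero.
-/

section Commutator

variable {A : Type*} [Ring A]

theorem br_eq_zero_of_commute {a b : A} (h : Commute a b) : br a b = 0 :=
  sub_eq_zero.mpr h.eq

theorem br_add_of_mem_center {c c' : A} (hc : c ∈ Subring.center A) (hc' : c' ∈ Subring.center A)
    (p p' : A) : br (c + p) (c' + p') = br p p' := by
  rw [Subring.mem_center_iff] at hc hc'
  simp only [br, add_mul, mul_add]
  rw [hc' c, hc' p, hc p']
  abel

end Commutator

namespace Submodule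

section Center

variable {A : Type*} [Ring A]

local notation "Z" => Subring.center A

theorem mem_one_center_iff {x : A} : x ∈ (1 : Submodule Z A) ↔ x ∈ Subring.center A :=
  mem_one.trans ⟨fun ⟨z, hz⟩ => hz ▸ z.2, fun hx => ⟨⟨x, hx⟩, rfl⟩⟩

theorem br_mem_mul_of_mem_one_sup {P : Submodule Z A} {x y : A} (hx : x ∈ 1 ⊔ P)
    (hy : y ∈ 1 ⊔ P) : br x y ∈ P * P := by
  obtain ⟨c, hc, p, hp, rfl⟩ := mem_sup.mp hx
  obtain ⟨c', hc', p', hp', rfl⟩ := mem_sup.mp hy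
  rw [br_add_of_mem_center (mem_one_center_iff.mp hc) (mem_one_center_iff.mp hc')]
  exact sub_mem (mul_mem_mul hp hp') (mul_mem_mul hp' hp)

end Center

section

variable {R A : Type*} [CommSemiring R] [Semiring A] [Algebra R A]

theorem one_sup_mul_one_sup_le {P : Submodule R A} (hP : P * P ≤ 1) :
    (1 ⊔ P) * (1 ⊔ P) ≤ 1 ⊔ P := by
  rw [mul_sup, mul_one, sup_mul, one_mul]
  exact sup_le le_rfl (sup_le le_sup_right (hP.trans le_sup_left))

theorem list_prod_mem_pow {Q : Submodule R A} {l : List A} (hl : ∀ x ∈ l, x ∈ Q) :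
    l.prod ∈ Q ^ l.length := by
  induction l with
  | nil => exact one_le.mp le_rfl
  | cons x l ih =>
    rw [List.prod_cons, List.length_cons, pow_succ']
    exact mul_mem_mul (hl x List.mem_cons_self) (ih fun y hy => hl y (List.mem_cons_of_mem x hy))

end

end Submodule

namespace ExteriorAlgebra

open CliffordAlgebra

variable {R M : Type*} [CommRing R] [AddCommGroup M] [Module R M]

local notation "𝔼" => evenOdd (0 : QuadraticForm R M) 0
local notation "𝕆" => evenOdd (0 : QuadraticForm R M) 1

theorem ι_mul_ι_anticomm (x y : M) : ι R x * ι R y = -(ι R y * ι R x) :=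
  eq_neg_of_add_eq_zero_left (ι_add_mul_swap x y)

theorem commute_ι_mul_ι (m₁ m₂ : M) (y : ExteriorAlgebra R M) :
    Commute (ι R m₁ * ι R m₂) y := by
  induction y using ExteriorAlgebra.induction with
  | algebraMap r => exact Algebra.commute_algebraMap_right r _
  | ι v =>
    simp only [Commute, SemiconjBy, mul_assoc]
    rw [ι_mul_ι_anticomm m₂ v, mul_neg, ← mul_assoc, ι_mul_ι_anticomm m₁ v, neg_mul, neg_neg,
      mul_assoc]
  | mul a b ha hb => exact ha.mul_right hb
  | add a b ha hb => exact ha.add_right hb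

theorem commute_of_mem_evenOdd_zero {x : ExteriorAlgebra R M} (hx : x ∈ 𝔼)
    (y : ExteriorAlgebra R M) : Commute x y := by
  induction x, hx using even_induction with
  | algebraMap r => exact Algebra.commute_algebraMap_left r y
  | add a b _ _ ha hb => exact ha.add_left hb
  | ι_mul_ι_mul m₁ m₂ a _ ha => exact (commute_ι_mul_ι m₁ m₂ y).mul_left ha

theorem mem_center_of_mem_evenOdd_zero {x : ExteriorAlgebra R M} (hx : x ∈ 𝔼) :
    x ∈ Subring.center (ExteriorAlgebra R M) :=
  Subring.mem_center_iff.mpr fun g => (commute_of_mem_evenOdd_zero hx g).eq.symm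

theorem ι_mul_of_mem_evenOdd_one (m : M) {y : ExteriorAlgebra R M} (hy : y ∈ 𝕆) :
    ι R m * y = -(y * ι R m) := by
  induction y, hy using odd_induction with
  | ι v => exact ι_mul_ι_anticomm m v
  | add a b _ _ ha hb => rw [mul_add, ha, hb, add_mul, neg_add]
  | ι_mul_ι_mul m₁ m₂ a _ ha =>
    rw [← mul_assoc, ← (commute_ι_mul_ι m₁ m₂ (ι R m)).eq, mul_assoc, ha, mul_neg]
    simp only [mul_assoc]

theorem mul_eq_neg_mul_of_mem_evenOdd_one {x y : ExteriorAlgebra R M} (hx : x ∈ 𝕆)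
    (hy : y ∈ 𝕆) : x * y = -(y * x) := by
  induction x, hx using odd_induction with
  | ι v => exact ι_mul_of_mem_evenOdd_one v hy
  | add a b _ _ ha hb => rw [add_mul, ha, hb, mul_add, neg_add]
  | ι_mul_ι_mul m₁ m₂ a _ ha =>
    rw [mul_assoc, ha, mul_neg, ← mul_assoc, (commute_ι_mul_ι m₁ m₂ y).eq, mul_assoc]

theorem mul_self_eq_zero_of_mem_evenOdd_one [Invertible (2 : R)] {x : ExteriorAlgebra R M}
    (hx : x ∈ 𝕆) : x * x = 0 := by
  have h : (2 : R) • (x * x) = 0 := by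
    rw [two_smul]
    nth_rw 2 [mul_eq_neg_mul_of_mem_evenOdd_one hx hx]
    exact add_neg_cancel _
  simpa using congrArg (⅟(2 : R) • ·) h

theorem mul_list_prod_mul_eq_zero [Invertible (2 : R)] {x : ExteriorAlgebra R M} (hx : x ∈ 𝕆)
    {l : List (ExteriorAlgebra R M)} (hl : ∀ y ∈ l, y ∈ 𝕆) : x * l.prod * x = 0 := by
  induction l with
  | nil => rw [List.prod_nil, mul_one, mul_self_eq_zero_of_mem_evenOdd_one hx]
  | cons y l ih =>
    rw [List.prod_cons, ← mul_assoc, mul_eq_neg_mul_of_mem_evenOdd_one hx (hl y List.mem_cons_self),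
      neg_mul, neg_mul, mul_assoc y, mul_assoc y,
      ih fun z hz => hl z (List.mem_cons_of_mem y hz), mul_zero, neg_zero]

theorem list_prod_eq_zero_of_not_nodup [Invertible (2 : R)] {l : List (ExteriorAlgebra R M)}
    (hl : ∀ y ∈ l, y ∈ 𝕆) (hd : ¬ l.Nodup) : l.prod = 0 := by
  induction l with
  | nil => exact absurd List.nodup_nil hd
  | cons x l ih =>
    by_cases hx : x ∈ l
    · obtain ⟨l₁, l₂, rfl⟩ := List.append_of_mem hx
      rw [List.prod_cons, List.prod_append, List.prod_cons, ← mul_assoc, ← mul_assoc,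
        mul_list_prod_mul_eq_zero (hl x List.mem_cons_self)
          fun y hy => hl y (List.mem_cons_of_mem x (List.mem_append_left _ hy)), zero_mul]
    · rw [List.prod_cons, ih (fun y hy => hl y (List.mem_cons_of_mem x hy))
        fun hnd => hd (List.nodup_cons.mpr ⟨hx, hnd⟩), mul_zero]

theorem mul_mem_evenOdd_zero {x y : ExteriorAlgebra R M} (hx : x ∈ 𝕆) (hy : y ∈ 𝕆) :
    x * y ∈ 𝔼 := by
  simpa only [show (1 + 1 : ZMod 2) = 0 from rfl] using SetLike.mul_mem_graded hx hy

theorem exists_add_eq (x : ExteriorAlgebra R M) : ∃ x₀ ∈ 𝔼, ∃ x₁ ∈ 𝕆, x₀ + x₁ = x :=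
  Submodule.mem_sup.mp <| (evenOdd_isCompl (Q := (0 : QuadraticForm R M))).sup_eq_top ▸
    Submodule.mem_top

theorem commute_br (x y z : ExteriorAlgebra R M) : Commute (br x y) z := by
  obtain ⟨x₀, hx₀, x₁, hx₁, rfl⟩ := exists_add_eq x
  obtain ⟨y₀, hy₀, y₁, hy₁, rfl⟩ := exists_add_eq y
  rw [br_add_of_mem_center (mem_center_of_mem_evenOdd_zero hx₀)
    (mem_center_of_mem_evenOdd_zero hy₀)]
  exact commute_of_mem_evenOdd_zero
    (sub_mem (mul_mem_evenOdd_zero hx₁ hy₁) (mul_mem_evenOdd_zero hy₁ hx₁)) z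

theorem tr_eq_zero (x y z : ExteriorAlgebra R M) : tr x y z = 0 :=
  br_eq_zero_of_commute (commute_br x y z)

section OddSpan

open Submodule

local notation "Z" => Subring.center (ExteriorAlgebra R M)

variable {ι : Type*} {o : ι → ExteriorAlgebra R M}

theorem span_range_mul_self_le_one (ho : ∀ i, o i ∈ 𝕆) :
    span Z (Set.range o) * span Z (Set.range o) ≤ 1 := by
  rw [span_mul_span, span_le]
  rintro _ ⟨_, ⟨i, rfl⟩, _, ⟨j, rfl⟩, rfl⟩
  exact mem_one_center_iff.mpr
    (mem_center_of_mem_evenOdd_zero (mul_mem_evenOdd_zero (ho i) (ho j)))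

theorem span_range_pow_eq_bot [Invertible (2 : R)] [Finite ι] (ho : ∀ i, o i ∈ 𝕆) :
    span Z (Set.range o) ^ (Nat.card ι + 1) = ⊥ := by
  rw [span_pow, span_eq_bot]
  intro x hx
  obtain ⟨f, rfl⟩ := Set.mem_pow.mp hx
  refine list_prod_eq_zero_of_not_nodup ?_ ?_
  · simp only [List.mem_ofFn, forall_exists_index, forall_apply_eq_imp_iff]
    intro i
    obtain ⟨j, hj⟩ := (f i).2
    exact hj ▸ ho j
  · rw [List.nodup_ofFn]
    intro hinj
    have := (Nat.card_le_card_of_injective _ (Subtype.val_injective.of_comp_iff f |>.mp hinj)).trans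
      (Finite.card_range_le o)
    simp at this

theorem mem_one_sup_span_of_mem_adjoin {y : ι → ExteriorAlgebra R M} (ho : ∀ i, o i ∈ 𝕆)
    (hyo : ∀ i, y i - o i ∈ 𝔼) {x : ExteriorAlgebra R M} (hx : x ∈ Algebra.adjoin R (Set.range y)) :
    x ∈ 1 ⊔ span Z (Set.range o) := by
  induction hx using Algebra.adjoin_induction with
  | mem x hx =>
    obtain ⟨i, rfl⟩ := hx
    rw [← sub_add_cancel (y i) (o i)]
    exact add_mem_sup (mem_one_center_iff.mpr (mem_center_of_mem_evenOdd_zero (hyo i)))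
      (subset_span ⟨i, rfl⟩)
  | algebraMap r =>
    exact mem_sup_left (mem_one_center_iff.mpr (Subring.mem_center_iff.mpr
      fun g => (Algebra.commutes r g).symm))
  | add x x' _ _ hx hx' => exact add_mem hx hx'
  | mul x x' _ _ hx hx' =>
    exact one_sup_mul_one_sup_le (span_range_mul_self_le_one ho) (mul_mem_mul hx hx')

end OddSpan

theorem list_prod_br_eq_zero [Invertible (2 : R)] {ι : Type*} [Finite ι]
    (y : ι → ExteriorAlgebra R M) {k : ℕ} {b c : Fin k → ExteriorAlgebra R M}
    (hb : ∀ i, b i ∈ Algebra.adjoin R (Set.range y))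
    (hc : ∀ i, c i ∈ Algebra.adjoin R (Set.range y))
    (hk : Nat.card ι < 2 * k) :
    (List.ofFn fun i => br (b i) (c i)).prod = 0 := by
  choose e he o ho hy using fun i => exists_add_eq (y i)
  set P := Submodule.span (Subring.center (ExteriorAlgebra R M)) (Set.range o)
  have hyo i : y i - o i ∈ 𝔼 := by rw [← hy i, add_sub_cancel_right]; exact he i
  have hmem {x} (hx : x ∈ Algebra.adjoin R (Set.range y)) : x ∈ 1 ⊔ P :=
    mem_one_sup_span_of_mem_adjoin ho hyo hx
  have hprod := Submodule.list_prod_mem_pow (Q := P * P)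
    (l := List.ofFn fun i => br (b i) (c i)) (by
      simp only [List.mem_ofFn, forall_exists_index, forall_apply_eq_imp_iff]
      exact fun i => Submodule.br_mem_mul_of_mem_one_sup (hmem (hb i)) (hmem (hc i)))
  rwa [List.length_ofFn, ← pow_two, ← pow_mul,
    pow_eq_zero_of_le (M₀ := Submodule _ _) hk (span_range_pow_eq_bot ho), Submodule.zero_eq_bot,
    Submodule.mem_bot]
    at hprod

end ExteriorAlgebra

namespace Matrix

theorem mul_eq_zero_of_forall_col_or_row {l m n α : Type*} [Fintype m]
    [NonUnitalNonAssocSemiring α] {T : Matrix l m α} {F : Matrix m n α}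
    (h : ∀ k, (∀ i, T i k = 0) ∨ ∀ j, F k j = 0) : T * F = 0 := by
  ext i j
  rw [mul_apply, zero_apply]
  refine Finset.sum_eq_zero fun k _ => ?_
  rcases h k with hT | hF
  · rw [hT, zero_mul]
  · rw [hF, mul_zero]

theorem isUpperTriangular_fin_two_iff {α : Type*} [Zero α] {M : Matrix (Fin 2) (Fin 2) α} :
    M.IsUpperTriangular ↔ M 1 0 = 0 := by
  refine ⟨fun h => h (by decide), fun h i j hij => ?_⟩
  fin_cases i <;> fin_cases j <;> first | exact h | exact absurd hij (by decide)

section UpperTriangular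

variable {n A : Type*} [Fintype n] [LinearOrder n] [Ring A]

theorem IsUpperTriangular.mul_apply_self {M N : Matrix n n A} (hM : M.IsUpperTriangular)
    (hN : N.IsUpperTriangular) (i : n) : (M * N) i i = M i i * N i i := by
  rw [mul_apply, Finset.sum_eq_single i]
  · intro k _ hki
    rcases hki.lt_or_gt with hlt | hgt
    · rw [hM hlt, zero_mul]
    · rw [hN hgt, mul_zero]
  · simp

theorem IsUpperTriangular.br {M N : Matrix n n A} (hM : M.IsUpperTriangular)
    (hN : N.IsUpperTriangular) : (_root_.br M N).IsUpperTriangular :=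
  (hM.mul hN).sub (hN.mul hM)

theorem IsUpperTriangular.br_apply_self {M N : Matrix n n A} (hM : M.IsUpperTriangular)
    (hN : N.IsUpperTriangular) (i : n) : _root_.br M N i i = _root_.br (M i i) (N i i) := by
  rw [_root_.br, sub_apply, hM.mul_apply_self hN, hN.mul_apply_self hM, _root_.br]

theorem list_prod_apply_self {l : List (Matrix n n A)} (hl : ∀ M ∈ l, M.IsUpperTriangular)
    (i : n) : l.prod i i = (l.map fun M => M i i).prod := by
  induction l with
  | nil => simp
  | cons M l ih =>
    have hl' : ∀ N ∈ l, N.IsUpperTriangular := fun N hN => hl N (List.mem_cons_of_mem M hN)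
    rw [List.prod_cons, (hl M List.mem_cons_self).mul_apply_self
      (list_prod_mem (S := blockTriangularSubsemiring A id) hl') i, ih hl', List.map_cons,
      List.prod_cons]

variable {R ι : Type*} [CommSemiring R] [Algebra R A] {ξ : ι → Matrix n n A}

theorem isUpperTriangular_of_mem_adjoin (hξ : ∀ k, (ξ k).IsUpperTriangular) {M : Matrix n n A}
    (hM : M ∈ Algebra.adjoin R (Set.range ξ)) : M.IsUpperTriangular :=
  Algebra.adjoin_le (S := blockTriangularSubalgebra R A id) (Set.range_subset_iff.mpr hξ) hM

theorem apply_self_mem_adjoin (hξ : ∀ k, (ξ k).IsUpperTriangular) {M : Matrix n n A}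
    (hM : M ∈ Algebra.adjoin R (Set.range ξ)) (i : n) :
    M i i ∈ Algebra.adjoin R (Set.range fun k => ξ k i i) := by
  induction hM using Algebra.adjoin_induction with
  | mem M hM =>
    obtain ⟨k, rfl⟩ := hM
    exact Algebra.subset_adjoin ⟨k, rfl⟩
  | algebraMap r =>
    rw [algebraMap_matrix_apply, if_pos rfl]
    exact Subalgebra.algebraMap_mem _ r
  | add M N _ _ hM hN => exact add_mem hM hN
  | mul M N hM' hN' hM hN =>
    rw [(isUpperTriangular_of_mem_adjoin hξ hM').mul_apply_self
      (isUpperTriangular_of_mem_adjoin hξ hN') i]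
    exact mul_mem hM hN

end UpperTriangular

end Matrix

theorem stmt16_general {K V : Type*} [Field K] [CharZero K] [AddCommGroup V] [Module K V]
    (m : ℕ)
    (ξ : Fin (2 * m + 1) → Matrix (Fin 2) (Fin 2) (ExteriorAlgebra K V))
    (hξ : ∀ i, ξ i 1 0 = 0)
    (a : ℕ → Matrix (Fin 2) (Fin 2) (ExteriorAlgebra K V))
    (ha : ∀ i, a i ∈ Algebra.adjoin K (Set.range ξ)) :
    tr (a 0) (a 1) (a 2) *
      (List.ofFn (fun i : Fin (m + 1) => br (a (2 * i + 3)) (a (2 * i + 4)))).prod = 0 := by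
  have hξU i := Matrix.isUpperTriangular_fin_two_iff.mpr (hξ i)
  have hU i : (a i).IsUpperTriangular := Matrix.isUpperTriangular_of_mem_adjoin hξU (ha i)
  have hD i j : a i j j ∈ Algebra.adjoin K (Set.range fun k => ξ k j j) :=
    Matrix.apply_self_mem_adjoin hξU (ha i) j
  set L := List.ofFn fun i : Fin (m + 1) => br (a (2 * i + 3)) (a (2 * i + 4)) with hL
  have hLU : ∀ M ∈ L, M.IsUpperTriangular := by
    simp only [hL, List.mem_ofFn, forall_exists_index, forall_apply_eq_imp_iff]
    exact fun i => (hU _).br (hU _)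
  have hT00 : tr (a 0) (a 1) (a 2) 0 0 = 0 := by
    rw [tr, ((hU 0).br (hU 1)).br_apply_self (hU 2), (hU 0).br_apply_self (hU 1)]
    exact ExteriorAlgebra.tr_eq_zero _ _ _
  have hT10 : tr (a 0) (a 1) (a 2) 1 0 = 0 := ((hU 0).br (hU 1)).br (hU 2) (by decide)
  have hF10 : L.prod 1 0 = 0 :=
    list_prod_mem (S := Matrix.blockTriangularSubsemiring _ id) hLU (by decide)
  have hF11 : L.prod 1 1 = 0 := by
    have := invertibleOfNonzero (two_ne_zero' K)
    rw [Matrix.list_prod_apply_self hLU, hL, List.map_ofFn]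
    simp only [Function.comp_def, (hU _).br_apply_self (hU _)]
    exact ExteriorAlgebra.list_prod_br_eq_zero (fun k => ξ k 1 1) (fun _ => hD _ 1)
      (fun _ => hD _ 1) (by rw [Nat.card_fin]; omega)
  exact Matrix.mul_eq_zero_of_forall_col_or_row <| Fin.forall_fin_two.mpr
    ⟨.inl <| Fin.forall_fin_two.mpr ⟨hT00, hT10⟩, .inr <| Fin.forall_fin_two.mpr ⟨hF10, hF11⟩⟩

/-- Let `G` be the Grassmann algebra of an infinite-dimensional vector space over a field of
characteristic zero and `m ≥ 1`.  Any subalgebra of `UT2(G)` generated by `2m+1` elements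
satisfies `[x1,x2,x3][x4,x5]⋯[x_{2m+4},x_{2m+5}] = 0`. -/
theorem stmt16 {K V : Type*} [Field K] [CharZero K] [AddCommGroup V] [Module K V]
    (hV : ¬ Module.Finite K V) (m : ℕ) (hm : 1 ≤ m)
    (ξ : Fin (2 * m + 1) → Matrix (Fin 2) (Fin 2) (ExteriorAlgebra K V))
    (hξ : ∀ i, ξ i 1 0 = 0)
    (a : ℕ → Matrix (Fin 2) (Fin 2) (ExteriorAlgebra K V))
    (ha : ∀ i, a i ∈ Algebra.adjoin K (Set.range ξ)) :
    tr (a 0) (a 1) (a 2) *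
      (List.ofFn (fun i : Fin (m + 1) => br (a (2 * i + 3)) (a (2 * i + 4)))).prod = 0 :=
  stmt16_general m ξ hξ a ha
end

section
/- Let K be a field, B = B_0 ⊕ B_1 a finite-dimensional superalgebra with bases {u_1,…,u_r} of B_0 and {v_1,…,v_s} of B_1, and K[X;Y] the free supercommutative algebra on even variables x_j^{(i)} and odd variables y_j^{(i)}. Define generic elements ξ_i = Σ_j u_j ⊗ x_j^{(i)} + Σ_j v_j ⊗ y_j^{(i)} ∈ B ⊗ K[X;Y]. Then the subalgebra K[ξ_1, ξ_2, …] generated by all ξ_i is isomorphic to the relatively free algebra F(G(B)) of the variety generated by the Grassmann envelope G(B) = G_0 ⊗ B_0 + G_1 ⊗ B_1; that is, the kernel of the homomorphism K⟨t_1,t_2,…⟩ → B ⊗ K[X;Y], t_i ↦ ξ_i, equals the T-ideal T(G(B)). -/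
/-!
An algebra homomorphism `Ψ : K[X;Y] → G` induces `B ⊗ K[X;Y] → G ⊗ B`, which carries `f(ξ)` to
`f(Ψξ)`. Every sequence `w_i = Σ α_ij ⊗ u_j + Σ β_ij ⊗ v_j` in `G(B)` is of the form `Ψξ`: the
even `α_ij` are central in `G` and the odd `β_ij` span a subspace of square-zero elements, so
`x_j^{(i)} ↦ α_ij`, `y_j^{(i)} ↦ β_ij` extends to `K[X;Y]`. Hence `f(ξ) = 0` forces `f(w) = 0`.
Conversely, the `Ψ` sending the even variables to scalars and the odd variables to distinct
generators of `G` put `Ψξ` in `G(B)`, and they jointly separate the points of `B ⊗ K[X;Y]`: over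
the infinite field `K` a polynomial vanishing everywhere is zero, and the odd part embeds into `G`.
-/

open scoped TensorProduct

noncomputable section

/-- The free supercommutative algebra `K[X;Y]` on even variables `x_j^{(i)}`
(`i ∈ ℕ`, `1 ≤ j ≤ r`) and odd variables `y_j^{(i)}` (`i ∈ ℕ`, `1 ≤ j ≤ s`), realized as the
tensor product of the polynomial algebra on the even variables with the Grassmann (exterior)
algebra on the odd variables. -/
abbrev SuperComm (K : Type*) [Field K] (r s : ℕ) : Type _ :=
  MvPolynomial (ℕ × Fin r) K ⊗[K] ExteriorAlgebra K ((ℕ × Fin s) → K)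

/-- The even variable `x_j^{(i)}` of `K[X;Y]`. -/
def xgen (K : Type*) [Field K] (r s : ℕ) (i : ℕ) (j : Fin r) : SuperComm K r s :=
  MvPolynomial.X (i, j) ⊗ₜ 1

/-- The odd variable `y_j^{(i)}` of `K[X;Y]`. -/
def ygen (K : Type*) [Field K] (r s : ℕ) (i : ℕ) (j : Fin s) : SuperComm K r s :=
  1 ⊗ₜ ExteriorAlgebra.ι K (Pi.single (i, j) 1)

/-- The generic elements `ξ_i = Σ_j u_j ⊗ x_j^{(i)} + Σ_j v_j ⊗ y_j^{(i)} ∈ B ⊗ K[X;Y]`. -/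
def xi {K : Type*} [Field K] {B : Type*} [Ring B] [Algebra K B] {r s : ℕ}
    (u : Fin r → B) (v : Fin s → B) (i : ℕ) : B ⊗[K] SuperComm K r s :=
  (∑ j, u j ⊗ₜ xgen K r s i j) + ∑ j, v j ⊗ₜ ygen K r s i j

/-- The infinite-dimensional Grassmann algebra `G` over `K`. -/
abbrev Grass (K : Type*) [Field K] : Type _ := ExteriorAlgebra K (ℕ → K)

/-- The Grassmann envelope `G(B) = G₀ ⊗ B₀ + G₁ ⊗ B₁ ⊆ G ⊗ B` of a superalgebra `B`
with grading `ℬ : ZMod 2 → Submodule K B`; here `G` carries its natural `ℤ/2`-grading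
`G = G₀ ⊕ G₁` by even/odd elements. -/
def GrassEnv {K : Type*} [Field K] {B : Type*} [Ring B] [Algebra K B]
    (ℬ : ZMod 2 → Submodule K B) : Submodule K (Grass K ⊗[K] B) :=
  Submodule.span K
    {z | ∃ g b, ((g ∈ CliffordAlgebra.evenOdd (0 : QuadraticForm K (ℕ → K)) 0 ∧ b ∈ ℬ 0) ∨
        (g ∈ CliffordAlgebra.evenOdd (0 : QuadraticForm K (ℕ → K)) 1 ∧ b ∈ ℬ 1)) ∧
        z = g ⊗ₜ b}

namespace ExteriorAlgebra

variable {K M : Type*} [CommRing K] [AddCommGroup M] [Module K M]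

local notation "ev" => CliffordAlgebra.evenOdd (0 : QuadraticForm K M) 0
local notation "od" => CliffordAlgebra.evenOdd (0 : QuadraticForm K M) 1

theorem ι_mul_ι_anticomm_s19 (a b : M) : ι K a * ι K b = -(ι K b * ι K a) :=
  eq_neg_of_add_eq_zero_left (ι_add_mul_swap a b)

theorem commute_ι_ι_mul_ι (m m₁ m₂ : M) : Commute (ι K m) (ι K m₁ * ι K m₂) := by
  rw [Commute, SemiconjBy, ← mul_assoc, ι_mul_ι_anticomm_s19 m m₁, neg_mul, mul_assoc,
    ι_mul_ι_anticomm_s19 m m₂, mul_neg, neg_neg, ← mul_assoc]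

theorem commute_ι_of_mem_even {x : ExteriorAlgebra K M} (hx : x ∈ ev) (m : M) :
    Commute x (ι K m) := by
  induction x, hx using CliffordAlgebra.even_induction with
  | algebraMap r => exact Algebra.commute_algebraMap_left r _
  | add x y _ _ ihx ihy => exact ihx.add_left ihy
  | ι_mul_ι_mul m₁ m₂ y _ ihy => exact ((commute_ι_ι_mul_ι m m₁ m₂).symm).mul_left ihy

theorem mem_center_of_mem_even {x : ExteriorAlgebra K M} (hx : x ∈ ev) :
    x ∈ Subalgebra.center K (ExteriorAlgebra K M) := by
  rw [Subalgebra.mem_center_iff]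
  intro y
  induction y using CliffordAlgebra.induction with
  | algebraMap r => exact Algebra.commutes r x
  | ι m => exact (commute_ι_of_mem_even hx m).symm
  | mul a b iha ihb => rw [mul_assoc, ihb, ← mul_assoc, iha, mul_assoc]
  | add a b iha ihb => rw [add_mul, iha, ihb, mul_add]

theorem ι_mul_eq_neg_mul_ι_of_mem_odd {x : ExteriorAlgebra K M} (hx : x ∈ od) (m : M) :
    ι K m * x = -(x * ι K m) := by
  induction x, hx using CliffordAlgebra.odd_induction with
  | ι v => exact ι_mul_ι_anticomm_s19 m v
  | add x y _ _ ihx ihy => rw [mul_add, ihx, ihy, add_mul, neg_add]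
  | ι_mul_ι_mul m₁ m₂ y _ ihy =>
    rw [← mul_assoc, (commute_ι_ι_mul_ι m m₁ m₂).eq, mul_assoc, ihy, mul_neg, ← mul_assoc]

theorem mul_eq_neg_mul_of_mem_odd {x y : ExteriorAlgebra K M} (hx : x ∈ od) (hy : y ∈ od) :
    x * y = -(y * x) := by
  induction x, hx using CliffordAlgebra.odd_induction with
  | ι v => exact ι_mul_eq_neg_mul_ι_of_mem_odd hy v
  | add a b _ _ iha ihb => rw [add_mul, iha, ihb, mul_add, neg_add]
  | ι_mul_ι_mul m₁ m₂ a _ iha =>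
    have hc := Subalgebra.mem_center_iff.mp
      (mem_center_of_mem_even (CliffordAlgebra.ι_mul_ι_mem_evenOdd_zero _ m₁ m₂)) y
    rw [mul_assoc, iha, mul_neg, ← mul_assoc, ← hc, mul_assoc]

theorem mul_self_eq_zero_of_mem_odd [Invertible (2 : K)] {x : ExteriorAlgebra K M}
    (hx : x ∈ od) : x * x = 0 := by
  have h2 : (2 : K) • (x * x) = 0 := by
    rw [two_smul]
    nth_rewrite 1 [mul_eq_neg_mul_of_mem_odd hx hx]
    exact neg_add_cancel _
  rw [← one_smul K (x * x), ← invOf_mul_self (2 : K), mul_smul, h2, smul_zero]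

end ExteriorAlgebra

theorem LinearMap.exists_apply_pi_single_eq {K ι V : Type*} [DivisionRing K] [DecidableEq ι]
    [AddCommGroup V] [Module K V] (b : ι → V) :
    ∃ m : (ι → K) →ₗ[K] V,
      (∀ i, m (Pi.single i 1) = b i) ∧ LinearMap.range m ≤ Submodule.span K (Set.range b) := by
  obtain ⟨g, hg⟩ := LinearMap.exists_leftInverse_of_injective
    (Finsupp.lcoeFun (α := ι) (M := K) (R := K)) (LinearMap.ker_eq_bot.mpr DFunLike.coe_injective)
  refine ⟨Finsupp.linearCombination K b ∘ₗ g, fun i => ?_, ?_⟩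
  · have : g (Pi.single i 1) = Finsupp.single i 1 := by
      simpa [Finsupp.single_eq_pi_single] using LinearMap.congr_fun hg (Finsupp.single i (1 : K))
    simp [this]
  · rw [LinearMap.range_comp, ← Finsupp.range_linearCombination]
    exact LinearMap.map_le_range

section JointlyInjective

variable {R M V W ι : Type*} [CommRing R] [AddCommGroup M] [Module R M] [Module.Free R M]
  [AddCommGroup V] [Module R V] [AddCommGroup W] [Module R W]

theorem TensorProduct.eq_zero_of_forall_lTensor_eq_zero (f : ι → V →ₗ[R] W)
    (hf : ∀ x, (∀ i, f i x = 0) → x = 0) {z : M ⊗[R] V} (hz : ∀ i, (f i).lTensor M z = 0) :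
    z = 0 := by
  classical
  let b := Module.Free.chooseBasis R M
  have hmap : ∀ i (y : M ⊗[R] V), TensorProduct.equivFinsuppOfBasisLeft b ((f i).lTensor M y) =
      Finsupp.mapRange (f i) (map_zero _) (TensorProduct.equivFinsuppOfBasisLeft b y) := by
    intro i y
    induction y using TensorProduct.induction_on with
    | zero => simp
    | tmul m v => ext k; simp
    | add x y hx hy => rw [map_add, map_add, hx, hy, map_add, Finsupp.mapRange_add (map_add _)]
  refine (TensorProduct.equivFinsuppOfBasisLeft b).map_eq_zero_iff.mp
    (Finsupp.ext fun k => hf _ fun i => ?_)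
  simpa [hz i] using (DFunLike.congr_fun (hmap i z) k).symm

theorem TensorProduct.eq_zero_of_forall_rTensor_eq_zero (f : ι → V →ₗ[R] W)
    (hf : ∀ x, (∀ i, f i x = 0) → x = 0) {z : V ⊗[R] M} (hz : ∀ i, (f i).rTensor M z = 0) :
    z = 0 := by
  refine (TensorProduct.comm R V M).map_eq_zero_iff.mp
    (TensorProduct.eq_zero_of_forall_lTensor_eq_zero f hf fun i => ?_)
  rw [← LinearMap.comm_comp_rTensor_comp_comm_eq]
  simp [hz i]

end JointlyInjective

theorem MvPolynomial.eq_zero_of_forall_rTensor_aeval_eq_zero {K σ W : Type*} [Field K]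
    [Infinite K] [AddCommGroup W] [Module K W] {q : MvPolynomial σ K ⊗[K] W}
    (hq : ∀ l : σ → K, (MvPolynomial.aeval l).toLinearMap.rTensor W q = 0) : q = 0 :=
  TensorProduct.eq_zero_of_forall_rTensor_eq_zero _
    (fun _ hp => MvPolynomial.funext fun l => by simpa using hp l) hq

theorem FreeAlgebra.algHom_lift_apply {R X A A' : Type*} [CommSemiring R] [Semiring A]
    [Algebra R A] [Semiring A'] [Algebra R A'] (Φ : A →ₐ[R] A') (ξ : X → A) (f : FreeAlgebra R X) :
    Φ (FreeAlgebra.lift R ξ f) = FreeAlgebra.lift R (Φ ∘ ξ) f := by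
  rw [← AlgHom.comp_apply]
  congr 1
  ext
  simp

theorem Function.ExtendByZero.linearMap_injective {R ι η : Type*} [Semiring R] {e : ι → η}
    (he : Function.Injective e) : Function.Injective (Function.ExtendByZero.linearMap R e) :=
  fun f g h => funext fun i => by simpa [he.extend_apply] using congrFun h (e i)

section GrassmannEnvelope

variable {K : Type*} [Field K] {B : Type*} [Ring B] [Algebra K B] {ℬ : ZMod 2 → Submodule K B}
  {ι κ : Type*} [Fintype ι] [Fintype κ] {u : ι → B} {v : κ → B}

local notation "ev" => CliffordAlgebra.evenOdd (0 : QuadraticForm K (ℕ → K)) 0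
local notation "od" => CliffordAlgebra.evenOdd (0 : QuadraticForm K (ℕ → K)) 1

theorem sum_tmul_add_sum_tmul_mem_grassEnv (hu0 : ∀ j, u j ∈ ℬ 0) (hv1 : ∀ j, v j ∈ ℬ 1)
    {α : ι → Grass K} {β : κ → Grass K} (hα : ∀ j, α j ∈ ev) (hβ : ∀ j, β j ∈ od) :
    (∑ j, α j ⊗ₜ u j) + ∑ j, β j ⊗ₜ v j ∈ GrassEnv ℬ :=
  add_mem (sum_mem fun j _ => Submodule.subset_span ⟨_, _, .inl ⟨hα j, hu0 j⟩, rfl⟩)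
    (sum_mem fun j _ => Submodule.subset_span ⟨_, _, .inr ⟨hβ j, hv1 j⟩, rfl⟩)

theorem exists_sum_tmul_add_sum_tmul_of_mem_grassEnv
    (huspan : ∀ b ∈ ℬ 0, b ∈ Submodule.span K (Set.range u))
    (hvspan : ∀ b ∈ ℬ 1, b ∈ Submodule.span K (Set.range v)) {z : Grass K ⊗[K] B}
    (hz : z ∈ GrassEnv ℬ) :
    ∃ (α : ι → Grass K) (β : κ → Grass K), (∀ j, α j ∈ ev) ∧ (∀ j, β j ∈ od) ∧
      z = (∑ j, α j ⊗ₜ u j) + ∑ j, β j ⊗ₜ v j := by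
  induction hz using Submodule.span_induction with
  | mem _ hz =>
    obtain ⟨g, b, (⟨hg, hb⟩ | ⟨hg, hb⟩), rfl⟩ := hz
    · obtain ⟨c, rfl⟩ := (Submodule.mem_span_range_iff_exists_fun K).mp (huspan b hb)
      refine ⟨fun j => c j • g, 0, fun j => Submodule.smul_mem _ _ hg, fun _ => zero_mem _, ?_⟩
      simp [TensorProduct.tmul_sum, TensorProduct.smul_tmul]
    · obtain ⟨c, rfl⟩ := (Submodule.mem_span_range_iff_exists_fun K).mp (hvspan b hb)
      refine ⟨0, fun j => c j • g, fun _ => zero_mem _, fun j => Submodule.smul_mem _ _ hg, ?_⟩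
      simp [TensorProduct.tmul_sum, TensorProduct.smul_tmul]
  | zero => exact ⟨0, 0, fun _ => zero_mem _, fun _ => zero_mem _, by simp⟩
  | add _ _ _ _ hx hy =>
    obtain ⟨α, β, hα, hβ, rfl⟩ := hx
    obtain ⟨α', β', hα', hβ', rfl⟩ := hy
    refine ⟨α + α', β + β', fun j => add_mem (hα j) (hα' j), fun j => add_mem (hβ j) (hβ' j), ?_⟩
    simp only [Pi.add_apply, TensorProduct.add_tmul, Finset.sum_add_distrib]
    abel
  | smul c _ _ hx =>
    obtain ⟨α, β, hα, hβ, rfl⟩ := hx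
    refine ⟨c • α, c • β, fun j => Submodule.smul_mem _ _ (hα j),
      fun j => Submodule.smul_mem _ _ (hβ j), ?_⟩
    simp only [Pi.smul_apply, TensorProduct.smul_tmul', smul_add, Finset.smul_sum]

end GrassmannEnvelope

namespace SuperComm

variable {K : Type*} [Field K] {r s : ℕ}

section Lift

variable {A : Type*} [Ring A] [Algebra K A]

def lift (a : ℕ × Fin r → Subalgebra.center K A) (m : ((ℕ × Fin s) → K) →ₗ[K] A)
    (hm : ∀ x, m x * m x = 0) : SuperComm K r s →ₐ[K] A :=
  Algebra.TensorProduct.lift ((Subalgebra.center K A).val.comp (MvPolynomial.aeval a))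
    (ExteriorAlgebra.lift K ⟨m, hm⟩)
    fun _ _ => (Subalgebra.mem_center_iff.mp (SetLike.coe_mem _) _).symm

variable (a : ℕ × Fin r → Subalgebra.center K A) (m : ((ℕ × Fin s) → K) →ₗ[K] A)
    (hm : ∀ x, m x * m x = 0)

theorem lift_tmul (p : MvPolynomial (ℕ × Fin r) K) (e : ExteriorAlgebra K ((ℕ × Fin s) → K)) :
    lift a m hm (p ⊗ₜ e) = MvPolynomial.aeval a p * ExteriorAlgebra.lift K ⟨m, hm⟩ e :=
  Algebra.TensorProduct.lift_tmul _ _ _ _ _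

@[simp]
theorem lift_xgen (i : ℕ) (j : Fin r) : lift a m hm (xgen K r s i j) = a (i, j) := by
  simp [xgen, lift_tmul]

@[simp]
theorem lift_ygen (i : ℕ) (j : Fin s) :
    lift a m hm (ygen K r s i j) = m (Pi.single (i, j) 1) := by
  simp [ygen, lift_tmul]

variable {B : Type*} [Ring B] [Algebra K B]

def tensorSwapHom (Ψ : SuperComm K r s →ₐ[K] A) : B ⊗[K] SuperComm K r s →ₐ[K] A ⊗[K] B :=
  (Algebra.TensorProduct.comm K B A).toAlgHom.comp
    (Algebra.TensorProduct.map (AlgHom.id K B) Ψ)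

theorem tensorSwapHom_xi (Ψ : SuperComm K r s →ₐ[K] A) (u : Fin r → B) (v : Fin s → B)
    (i : ℕ) : tensorSwapHom Ψ (xi u v i) =
      (∑ j, Ψ (xgen K r s i j) ⊗ₜ u j) + ∑ j, Ψ (ygen K r s i j) ⊗ₜ v j := by
  simp [tensorSwapHom, xi]

end Lift

theorem exists_algHom_grass_of_even_of_odd [Invertible (2 : K)]
    {α : ℕ → Fin r → Grass K} {β : ℕ → Fin s → Grass K}
    (hα : ∀ i j, α i j ∈ CliffordAlgebra.evenOdd (0 : QuadraticForm K (ℕ → K)) 0)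
    (hβ : ∀ i j, β i j ∈ CliffordAlgebra.evenOdd (0 : QuadraticForm K (ℕ → K)) 1) :
    ∃ Ψ : SuperComm K r s →ₐ[K] Grass K,
      (∀ i j, Ψ (xgen K r s i j) = α i j) ∧ ∀ i j, Ψ (ygen K r s i j) = β i j := by
  obtain ⟨m, hm, hrange⟩ :=
    LinearMap.exists_apply_pi_single_eq (K := K) fun p : ℕ × Fin s => β p.1 p.2
  have hodd : ∀ x, m x ∈ CliffordAlgebra.evenOdd (0 : QuadraticForm K (ℕ → K)) 1 :=
    fun x => (hrange.trans (Submodule.span_le.mpr (Set.range_subset_iff.mpr fun p => hβ _ _)))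
      (LinearMap.mem_range_self m x)
  exact ⟨lift (fun p => ⟨α p.1 p.2, ExteriorAlgebra.mem_center_of_mem_even (hα _ _)⟩) m
    (fun x => ExteriorAlgebra.mul_self_eq_zero_of_mem_odd (hodd x)), by simp, by simp [hm]⟩

def specialize (l : ℕ × Fin r → K) : SuperComm K r s →ₐ[K] Grass K :=
  (ExteriorAlgebra.map
      (Function.ExtendByZero.linearMap K (Encodable.encode : ℕ × Fin s → ℕ))).comp
    ((Algebra.TensorProduct.lid K (ExteriorAlgebra K ((ℕ × Fin s) → K))).toAlgHom.comp
      (Algebra.TensorProduct.map (MvPolynomial.aeval l) (AlgHom.id K _)))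

@[simp]
theorem specialize_xgen (l : ℕ × Fin r → K) (i : ℕ) (j : Fin r) :
    specialize (s := s) l (xgen K r s i j) = algebraMap K (Grass K) (l (i, j)) := by
  simp [specialize, xgen, Algebra.algebraMap_eq_smul_one]

@[simp]
theorem specialize_ygen (l : ℕ × Fin r → K) (i : ℕ) (j : Fin s) :
    specialize l (ygen K r s i j) = ExteriorAlgebra.ι K
      (Function.ExtendByZero.linearMap K Encodable.encode (Pi.single (i, j) 1)) := by
  simp [specialize, ygen]

theorem eq_zero_of_forall_specialize_eq_zero [Infinite K] {x : SuperComm K r s}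
    (hx : ∀ l : ℕ × Fin r → K, specialize (s := s) l x = 0) : x = 0 := by
  refine MvPolynomial.eq_zero_of_forall_rTensor_aeval_eq_zero fun l => ?_
  have hinj := ExteriorAlgebra.map_injective_field (LinearMap.ker_eq_bot.mpr
    (Function.ExtendByZero.linearMap_injective (R := K)
      (Encodable.encode_injective (α := ℕ × Fin s))))
  exact (Algebra.TensorProduct.lid K _).map_eq_zero_iff.mp (hinj ((hx l).trans (map_zero _).symm))

theorem eq_zero_of_forall_tensorSwapHom_specialize_eq_zero [Infinite K] {B : Type*} [Ring B]
    [Algebra K B] {z : B ⊗[K] SuperComm K r s}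
    (hz : ∀ l : ℕ × Fin r → K, tensorSwapHom (specialize (s := s) l) z = 0) : z = 0 :=
  TensorProduct.eq_zero_of_forall_lTensor_eq_zero
    (fun l : ℕ × Fin r → K => (specialize (s := s) l).toLinearMap)
    (fun _ hx => eq_zero_of_forall_specialize_eq_zero hx)
    fun l => (Algebra.TensorProduct.comm K B _).map_eq_zero_iff.mp (hz l)

end SuperComm

theorem stmt19_general {K : Type*} [Field K] [CharZero K]
    {B : Type*} [Ring B] [Algebra K B]
    (ℬ : ZMod 2 → Submodule K B)
    {r s : ℕ} (u : Fin r → B) (v : Fin s → B)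
    (hu0 : ∀ j, u j ∈ ℬ 0) (hv1 : ∀ j, v j ∈ ℬ 1)
    (huspan : ∀ b ∈ ℬ 0, b ∈ Submodule.span K (Set.range u))
    (hvspan : ∀ b ∈ ℬ 1, b ∈ Submodule.span K (Set.range v))
    (f : FreeAlgebra K ℕ) :
    FreeAlgebra.lift K (xi (K := K) u v) f = 0 ↔
      (∀ w : ℕ → Grass K ⊗[K] B, (∀ i, w i ∈ GrassEnv ℬ) →
        FreeAlgebra.lift K w f = 0) := by
  constructor
  · intro hf w hw
    choose α β hα hβ hw using fun i =>
      exists_sum_tmul_add_sum_tmul_of_mem_grassEnv huspan hvspan (hw i)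
    have : Invertible (2 : K) := invertibleOfNonzero two_ne_zero
    obtain ⟨Ψ, hΨx, hΨy⟩ := SuperComm.exists_algHom_grass_of_even_of_odd hα hβ
    have hwΨ : w = SuperComm.tensorSwapHom Ψ ∘ xi u v :=
      funext fun i => by simp [SuperComm.tensorSwapHom_xi, hΨx, hΨy, hw i]
    rw [hwΨ, ← FreeAlgebra.algHom_lift_apply, hf, map_zero]
  · intro H
    refine SuperComm.eq_zero_of_forall_tensorSwapHom_specialize_eq_zero fun l => ?_
    rw [FreeAlgebra.algHom_lift_apply]
    refine H _ fun i => ?_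
    rw [Function.comp_apply, SuperComm.tensorSwapHom_xi]
    refine sum_tmul_add_sum_tmul_mem_grassEnv hu0 hv1 (fun j => ?_) fun j => ?_
    · rw [SuperComm.specialize_xgen]
      exact SetLike.algebraMap_mem_graded _ _
    · rw [SuperComm.specialize_ygen]
      exact CliffordAlgebra.ι_mem_evenOdd_one _ _

/-- Let `B = B₀ ⊕ B₁` be a finite-dimensional superalgebra over a field `K` of
characteristic zero, with bases `u₁,…,u_r` of `B₀` and `v₁,…,v_s` of `B₁`.  The kernel of
the homomorphism `K⟨t₁,t₂,…⟩ → B ⊗ K[X;Y]`, `t_i ↦ ξ_i`, equals the T-ideal `T(G(B))` of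
polynomial identities of the Grassmann envelope `G(B) = G₀ ⊗ B₀ + G₁ ⊗ B₁`; that is, the
subalgebra generated by the generic elements `ξ_i` is isomorphic to the relatively free
algebra `F(G(B))` of the variety generated by `G(B)`. -/
theorem stmt19 {K : Type*} [Field K] [CharZero K]
    {B : Type*} [Ring B] [Algebra K B] [FiniteDimensional K B]
    (ℬ : ZMod 2 → Submodule K B) [GradedAlgebra ℬ]
    {r s : ℕ} (u : Fin r → B) (v : Fin s → B)
    (hu0 : ∀ j, u j ∈ ℬ 0) (hv1 : ∀ j, v j ∈ ℬ 1)
    (huind : LinearIndependent K u) (hvind : LinearIndependent K v)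
    (huspan : ∀ b ∈ ℬ 0, b ∈ Submodule.span K (Set.range u))
    (hvspan : ∀ b ∈ ℬ 1, b ∈ Submodule.span K (Set.range v))
    (f : FreeAlgebra K ℕ) :
    FreeAlgebra.lift K (xi (K := K) u v) f = 0 ↔
      (∀ w : ℕ → Grass K ⊗[K] B, (∀ i, w i ∈ GrassEnv ℬ) →
        FreeAlgebra.lift K w f = 0) :=
  stmt19_general ℬ u v hu0 hv1 huspan hvspan f
end
end
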